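/- In the algebra A_n(Σ)⁰ with generators X_{ij,γ} (1 ≤ i ≠ j ≤ n, γ ∈ π := π_1(Σ)) subject to X_{ij,γ} = X_{ji,γ⁻¹}, the conjugation action relations μ_i X_{ij,γ} μ_i⁻¹ = X_{ij,μγ}, μ_l X_{ij,γ} μ_l⁻¹ = X_{ij,γ} for l ≠ i, j, and the relations [X_{ij,e}, X_{kl,e}] = 0 (i,j,k,l distinct) and [X_{ij,e}, X_{jk,e} + X_{ik,e}] = 0 (i,j,k distinct) imposed as a module ideal over Λ_n = ⊕_j ℤπ, the following hold for all γ, δ ∈ π: [X_{ij,γ}, X_{kl,δ}] = 0 for i, j, k, l distinct, and [X_{ij,γ}, X_{jk,δ} + X_{ik,γδ}] = 0 for i, j, k distinct. -/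

import Mathlib

/-!
Every twisted generator is the image of an untwisted one under the conjugation action:
`X_{ij,γ} = μ_i^γ · X_{ij,e}`, while `μ_i^γ` fixes every generator not involving `i`.
Since the action is by ring automorphisms it preserves commutation, so applying `μ_i^γ` and
then `μ_k^δ` (resp. `μ_k^{δ⁻¹}`, which multiplies the `k`-end on the right by `δ`) to the
untwisted 4-term relations yields the twisted ones.
-/

section TwistedRelations

variable {A : Type*} [Ring A] {π : Type*} [Group π] {n : ℕ}
  (X : Fin n → Fin n → π → A) (act : Fin n → π → A ≃+* A)

theorem commute_twisted_of_pairwise_ne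
    (hact₁ : ∀ (i j : Fin n) (γ μ : π), i ≠ j → act i μ (X i j γ) = X i j (μ * γ))
    (hact₃ : ∀ (i j l : Fin n) (γ μ : π), i ≠ j → l ≠ i → l ≠ j →
      act l μ (X i j γ) = X i j γ)
    {i j k l : Fin n} (γ δ : π) (hij : i ≠ j) (hik : i ≠ k) (hil : i ≠ l) (hjk : j ≠ k)
    (hkl : k ≠ l) (hbase : Commute (X i j 1) (X k l 1)) :
    Commute (X i j γ) (X k l δ) := by
  have h := (hbase.map (act i γ)).map (act k δ)
  simpa only [hact₁ i j 1 γ hij, hact₃ k l i 1 γ hkl hik hil, hact₁ k l 1 δ hkl,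
    hact₃ i j k γ δ hij hik.symm hjk.symm, mul_one] using h

theorem commute_twisted_add_of_ne
    (hact₁ : ∀ (i j : Fin n) (γ μ : π), i ≠ j → act i μ (X i j γ) = X i j (μ * γ))
    (hact₂ : ∀ (i j : Fin n) (γ μ : π), i ≠ j → act j μ (X i j γ) = X i j (γ * μ⁻¹))
    (hact₃ : ∀ (i j l : Fin n) (γ μ : π), i ≠ j → l ≠ i → l ≠ j →
      act l μ (X i j γ) = X i j γ)
    {i j k : Fin n} (γ δ : π) (hij : i ≠ j) (hik : i ≠ k) (hjk : j ≠ k)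
    (hbase : Commute (X i j 1) (X j k 1 + X i k 1)) :
    Commute (X i j γ) (X j k δ + X i k (γ * δ)) := by
  have h := (hbase.map (act i γ)).map (act k δ⁻¹)
  simpa only [map_add, hact₁ i j 1 γ hij, hact₃ j k i 1 γ hjk hij hik, hact₁ i k 1 γ hik,
    hact₃ i j k γ δ⁻¹ hij hik.symm hjk.symm, hact₂ j k 1 δ⁻¹ hjk, hact₂ i k γ δ⁻¹ hik,
    inv_inv, mul_one, one_mul] using h

end TwistedRelations

theorem stmt17_general {A : Type*} [Ring A] {π : Type*} [Group π] {n : ℕ}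
    (X : Fin n → Fin n → π → A)
    (act : Fin n → π → A ≃+* A)
    (hact₁ : ∀ (i j : Fin n) (γ μ : π), i ≠ j → act i μ (X i j γ) = X i j (μ * γ))
    (hact₂ : ∀ (i j : Fin n) (γ μ : π), i ≠ j → act j μ (X i j γ) = X i j (γ * μ⁻¹))
    (hact₃ : ∀ (i j l : Fin n) (γ μ : π), i ≠ j → l ≠ i → l ≠ j →
      act l μ (X i j γ) = X i j γ)
    (hbase₄ : ∀ i j k l : Fin n, i ≠ j → i ≠ k → i ≠ l → j ≠ k → j ≠ l → k ≠ l →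
      X i j 1 * X k l 1 - X k l 1 * X i j 1 = 0)
    (hbase₃ : ∀ i j k : Fin n, i ≠ j → i ≠ k → j ≠ k →
      X i j 1 * (X j k 1 + X i k 1) - (X j k 1 + X i k 1) * X i j 1 = 0) :
    (∀ (i j k l : Fin n) (γ δ : π),
        i ≠ j → i ≠ k → i ≠ l → j ≠ k → j ≠ l → k ≠ l →
      X i j γ * X k l δ - X k l δ * X i j γ = 0) ∧
    (∀ (i j k : Fin n) (γ δ : π), i ≠ j → i ≠ k → j ≠ k →
      X i j γ * (X j k δ + X i k (γ * δ)) - (X j k δ + X i k (γ * δ)) * X i j γ = 0) := by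
  refine ⟨fun i j k l γ δ hij hik hil hjk hjl hkl => ?_, fun i j k γ δ hij hik hjk => ?_⟩
  · exact sub_eq_zero.mpr <| commute_twisted_of_pairwise_ne X act hact₁ hact₃ γ δ
      hij hik hil hjk hkl (sub_eq_zero.mp (hbase₄ i j k l hij hik hil hjk hjl hkl))
  · exact sub_eq_zero.mpr <| commute_twisted_add_of_ne X act hact₁ hact₂ hact₃ γ δ
      hij hik hjk (sub_eq_zero.mp (hbase₃ i j k hij hik hjk))

/-- In the algebra `A_n(Σ)⁰` — modeled here as a ring `A` with elements `X_{ij,γ}`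
subject to `X_{ij,γ} = X_{ji,γ⁻¹}`, equipped with the conjugation action of `π^n` by
ring automorphisms (`μ_i · X_{ij,γ} = X_{ij,μγ}`, `μ_j · X_{ij,γ} = X_{ij,γμ⁻¹}`,
`μ_l · X_{ij,γ} = X_{ij,γ}` for `l ∉ {i,j}`), where the untwisted 4-term relations
hold — the twisted 4-term relations hold for all `γ, δ ∈ π`. -/
theorem stmt17 {A : Type*} [Ring A] {π : Type*} [Group π] {n : ℕ}
    (X : Fin n → Fin n → π → A)
    (act : Fin n → π → A ≃+* A)
    (hsym : ∀ (i j : Fin n) (γ : π), i ≠ j → X i j γ = X j i γ⁻¹)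
    (hact₁ : ∀ (i j : Fin n) (γ μ : π), i ≠ j → act i μ (X i j γ) = X i j (μ * γ))
    (hact₂ : ∀ (i j : Fin n) (γ μ : π), i ≠ j → act j μ (X i j γ) = X i j (γ * μ⁻¹))
    (hact₃ : ∀ (i j l : Fin n) (γ μ : π), i ≠ j → l ≠ i → l ≠ j →
      act l μ (X i j γ) = X i j γ)
    (hbase₄ : ∀ i j k l : Fin n, i ≠ j → i ≠ k → i ≠ l → j ≠ k → j ≠ l → k ≠ l →
      X i j 1 * X k l 1 - X k l 1 * X i j 1 = 0)
    (hbase₃ : ∀ i j k : Fin n, i ≠ j → i ≠ k → j ≠ k →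
      X i j 1 * (X j k 1 + X i k 1) - (X j k 1 + X i k 1) * X i j 1 = 0) :
    (∀ (i j k l : Fin n) (γ δ : π),
        i ≠ j → i ≠ k → i ≠ l → j ≠ k → j ≠ l → k ≠ l →
      X i j γ * X k l δ - X k l δ * X i j γ = 0) ∧
    (∀ (i j k : Fin n) (γ δ : π), i ≠ j → i ≠ k → j ≠ k →
      X i j γ * (X j k δ + X i k (γ * δ)) - (X j k δ + X i k (γ * δ)) * X i j γ = 0) :=
  stmt17_general X act hact₁ hact₂ hact₃ hbase₄ hbase₃
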